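/- Let q ≥ 1 be a natural number, let X be a finite simple (q+1)-regular graph with adjacency matrix A, and let N ≥ 1 be a natural number. Then there exists a function h : ℂ → ℂ, holomorphic on Ω, such that h(u)^N = det(I - u·A + qu²·I) for all u ∈ Ω. (In other words, the polynomial det Δ(X,u) = det(I - u·A + qu²·I) has an analytic N-th root on Ω.) -/

import Mathlib

/-! The spectral theorem for the adjacency matrix `A` factors
`det(I - uA + qu²I) = ∏ᵢ (1 - μᵢu + qu²)` over the eigenvalues of `A`, and `|μᵢ| ≤ q + 1` by
`(q+1)`-regularity. For such `μ`, the factor `1 - μu + qu²` never lies on the closed negative real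
axis when `u ∈ Ω`: it is real only if `u` is real, where it is at least `(1 - |u|)(1 - q|u|) > 0`,
or if `μ = 2q Re u`, where it equals `1 - q|u|² > 0`. So the principal branch of `z ↦ z^(1/N)` is
holomorphic on each factor, and the product of these roots is an `N`-th root of the determinant. -/

/-- The interior `Ω` of the region `C`: `|u| < q^(-1/2)`, and if `u` is real
then `|u| < 1/q`. -/
def Omega (q : ℝ) : Set ℂ :=
  {u : ℂ | ‖u‖ < (Real.sqrt q)⁻¹ ∧ (u.im = 0 → |u.re| < 1 / q)}

open Matrix

theorem mul_normSq_lt_one_of_mem_Omega {q : ℝ} (hq : 0 < q) {u : ℂ} (hu : u ∈ Omega q) :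
    q * Complex.normSq u < 1 := by
  have h := pow_lt_pow_left₀ hu.1 (norm_nonneg u) two_ne_zero
  rw [Complex.sq_norm, inv_pow, Real.sq_sqrt hq.le] at h
  exact (lt_inv_mul_iff₀ hq).mp (by rwa [mul_one])

theorem one_sub_mul_add_mul_sq_mem_slitPlane {q l : ℝ} (hq : 1 ≤ q) (hl : |l| ≤ q + 1)
    {u : ℂ} (hu : u ∈ Omega q) : 1 - u * l + q * u ^ 2 ∈ Complex.slitPlane := by
  have hq₀ : 0 < q := by linarith
  have hnormSq := mul_normSq_lt_one_of_mem_Omega hq₀ hu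
  rw [Complex.normSq_apply] at hnormSq
  rw [Complex.mem_slitPlane_iff, or_iff_not_imp_right, not_not]
  intro him
  simp only [Complex.sub_im, Complex.add_im, Complex.one_im, Complex.mul_im, Complex.ofReal_re,
    Complex.ofReal_im, sq, Complex.mul_re] at him
  simp only [Complex.sub_re, Complex.add_re, Complex.one_re, Complex.mul_re, Complex.mul_im,
    Complex.ofReal_re, Complex.ofReal_im, sq]
  have him' : u.im * (2 * q * u.re - l) = 0 := by linarith
  rcases mul_eq_zero.mp him' with hreal | hcrit
  · have hx : q * |u.re| < 1 := by
      have := hu.2 hreal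
      rwa [lt_div_iff₀ hq₀, mul_comm] at this
    have hx' : |u.re| < 1 := by nlinarith [abs_nonneg u.re]
    have hxl : u.re * l ≤ |u.re| * (q + 1) :=
      calc u.re * l ≤ |u.re * l| := le_abs_self _
        _ = |u.re| * |l| := abs_mul _ _
        _ ≤ |u.re| * (q + 1) := mul_le_mul_of_nonneg_left hl (abs_nonneg _)
    rw [hreal]
    nlinarith [abs_mul_abs_self u.re, mul_pos (sub_pos.mpr hx') (sub_pos.mpr hx)]
  · obtain rfl : l = 2 * q * u.re := by linarith
    nlinarith

theorem Matrix.IsHermitian.det_smul_one_add_smul {n 𝕜 : Type*} [Fintype n] [DecidableEq n]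
    [RCLike 𝕜] {A : Matrix n n 𝕜} (hA : A.IsHermitian) (a b : 𝕜) :
    (a • 1 + b • A).det = ∏ i, (a + b * hA.eigenvalues i) := by
  conv_lhs => rw [hA.spectral_theorem,
    ← map_one (Unitary.conjStarAlgAut 𝕜 _ hA.eigenvectorUnitary), ← map_smul, ← map_smul,
    ← map_add, Unitary.conjStarAlgAut_apply,
    det_conj_of_mul_eq_one (Unitary.coe_mul_star_self _) (Unitary.coe_star_mul_self _)]
  rw [← det_diagonal]
  congr 1
  ext i j
  by_cases h : i = j <;> simp [h]

theorem Matrix.IsHermitian.abs_eigenvalues_le {n 𝕜 : Type*} [Fintype n] [DecidableEq n]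
    [RCLike 𝕜] {A : Matrix n n 𝕜} (hA : A.IsHermitian) {r : ℝ} (hr : ∀ i, ∑ j, ‖A i j‖ ≤ r)
    (i : n) : |hA.eigenvalues i| ≤ r := by
  have : Nonempty n := ⟨i⟩
  let := Matrix.linftyOpNormedRing (n := n) (α := 𝕜)
  let := Matrix.linftyOpNormedAlgebra (R := ℝ) (n := n) (α := 𝕜)
  calc |hA.eigenvalues i| = ‖hA.eigenvalues i‖ := rfl
    _ ≤ ‖A‖ := spectrum.norm_le_norm_of_mem (hA.eigenvalues_mem_spectrum_real i)
    _ ≤ r := by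
      obtain ⟨k, -, hk⟩ := Finset.exists_mem_eq_sup Finset.univ Finset.univ_nonempty
        fun k ↦ ∑ j, ‖A k j‖₊
      rw [linfty_opNorm_def, hk, NNReal.coe_sum]
      exact hr k

theorem SimpleGraph.sum_norm_adjMatrix_apply {V 𝕜 : Type*} [Fintype V] [RCLike 𝕜]
    (G : SimpleGraph V) [DecidableRel G.Adj] (i : V) :
    ∑ j, ‖G.adjMatrix 𝕜 i j‖ = G.degree i := by
  simp [adjMatrix_apply, apply_ite (‖·‖), Finset.sum_boole, ← card_neighborFinset_eq_degree,
    neighborFinset_eq_filter]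

theorem SimpleGraph.IsRegularOfDegree.abs_eigenvalues_adjMatrix_le {V 𝕜 : Type*} [Fintype V]
    [DecidableEq V] [RCLike 𝕜] {G : SimpleGraph V} [DecidableRel G.Adj] {d : ℕ}
    (hG : G.IsRegularOfDegree d) (i : V) : |(G.isHermitian_adjMatrix 𝕜).eigenvalues i| ≤ d :=
  (G.isHermitian_adjMatrix 𝕜).abs_eigenvalues_le (fun j ↦ by rw [G.sum_norm_adjMatrix_apply, hG j]) i

/-- For a finite simple `(q+1)`-regular graph `X` with adjacency matrix `A`,
the polynomial `det Δ(X,u) = det(I - u·A + qu²·I)` has an analytic `N`-th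
root on `Ω`. -/
theorem det_delta_has_analytic_nth_root (q : ℕ) (hq : 1 ≤ q)
    {V : Type*} [Fintype V] [DecidableEq V]
    (G : SimpleGraph V) [DecidableRel G.Adj]
    (hreg : G.IsRegularOfDegree (q + 1)) (N : ℕ) (hN : 1 ≤ N) :
    ∃ h : ℂ → ℂ, DifferentiableOn ℂ h (Omega q) ∧
      ∀ u ∈ Omega q,
        h u ^ N =
          ((1 : Matrix V V ℂ) - u • G.adjMatrix ℂ
            + ((q : ℂ) * u ^ 2) • (1 : Matrix V V ℂ)).det := by
  have hA := G.isHermitian_adjMatrix ℂ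
  have hfactor (i : V) {u : ℂ} (hu : u ∈ Omega q) :
      1 - u * hA.eigenvalues i + q * u ^ 2 ∈ Complex.slitPlane :=
    one_sub_mul_add_mul_sq_mem_slitPlane (by exact_mod_cast hq)
      (by exact_mod_cast hreg.abs_eigenvalues_adjMatrix_le i) hu
  refine ⟨fun u ↦ ∏ i, (1 - u * hA.eigenvalues i + q * u ^ 2) ^ (N⁻¹ : ℂ), ?_, fun u _ ↦ ?_⟩
  · exact DifferentiableOn.fun_finsetProd fun i _ ↦
      (by fun_prop : Differentiable ℂ _).differentiableOn.cpow_const fun u hu ↦ hfactor i hu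
  · have hdet : (1 : Matrix V V ℂ) - u • G.adjMatrix ℂ + ((q : ℂ) * u ^ 2) • 1
        = (1 + q * u ^ 2) • 1 + (-u) • G.adjMatrix ℂ := by module
    rw [hdet, hA.det_smul_one_add_smul, ← Finset.prod_pow]
    refine Finset.prod_congr rfl fun i _ ↦ ?_
    rw [Complex.cpow_nat_inv_pow _ (by omega), RCLike.ofReal_eq_complex_ofReal]
    ring
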